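/- arXiv:1601.02691 — 2 statements merged into one kernel-verified Lean document; each statement's English description precedes it below -/
import Mathlib

section
/- Let F(y) = (α + β·y)^n with β ≠ 0 and n ≠ 1. If y solves y'' + F(y) = 0, then for any λ > 0 the function z(t) = λ^(2/(n-1)) · (y(λ t) + α/β) − α/β also solves z'' + F(z) = 0. (This is the scaling symmetry giving the two-dimensional algebra A₂.) -/
theorem scaling_symmetry_power
    (α β n : ℝ) (hβ : β ≠ 0) (hn : n ≠ 1)
    (y : ℝ → ℝ) (hy : Differentiable ℝ y) (hy' : Differentiable ℝ (deriv y))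
    (hpos : ∀ t, 0 < α + β * y t)
    (hode : ∀ t, deriv (deriv y) t + (α + β * y t) ^ n = 0)
    (lam : ℝ) (hlam : 0 < lam) :
    ∀ t, deriv (deriv (fun s => lam ^ (2 / (n - 1)) * (y (lam * s) + α / β) - α / β)) t
        + (α + β * (lam ^ (2 / (n - 1)) * (y (lam * t) + α / β) - α / β)) ^ n = 0 := by
  intro t
  set c : ℝ := lam ^ (2 / (n - 1)) with hc
  have hcpos : 0 < c := Real.rpow_pos_of_pos hlam _
  have hys : ∀ u : ℝ, HasDerivAt (fun s : ℝ => lam * s) lam u := by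
    intro u
    simpa using (hasDerivAt_id u).const_mul lam
  -- first derivative
  have h1 : ∀ u : ℝ, HasDerivAt (fun s => c * (y (lam * s) + α / β) - α / β)
      (c * (deriv y (lam * u) * lam)) u := by
    intro u
    exact ((((hy (lam * u)).hasDerivAt.comp u (hys u)).add_const (α / β)).const_mul c).sub_const _
  have hd1 : deriv (fun s => c * (y (lam * s) + α / β) - α / β)
      = fun u => c * (deriv y (lam * u) * lam) := by
    funext u; exact (h1 u).deriv
  rw [hd1]
  -- second derivative
  have h2 : HasDerivAt (fun u => c * (deriv y (lam * u) * lam))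
      (c * (deriv (deriv y) (lam * t) * lam * lam)) t := by
    exact (((hy' (lam * t)).hasDerivAt.comp t (hys t)).mul_const lam).const_mul c
  rw [h2.deriv]
  have hode' : deriv (deriv y) (lam * t) = -(α + β * y (lam * t)) ^ n := by
    have := hode (lam * t); linarith
  rw [hode']
  have hA : α + β * (c * (y (lam * t) + α / β) - α / β) = c * (α + β * y (lam * t)) := by
    have h := mul_div_cancel₀ α hβ
    linear_combination (c - 1) * h
  rw [hA]
  have hmul : (c * (α + β * y (lam * t))) ^ n = c ^ n * (α + β * y (lam * t)) ^ n :=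
    Real.mul_rpow hcpos.le (hpos (lam * t)).le
  rw [hmul]
  have hkey : c ^ n = c * (lam * lam) := by
    have h2 : lam * lam = lam ^ (2 : ℝ) := by
      rw [show (2:ℝ) = ((2:ℕ):ℝ) by norm_num, Real.rpow_natCast]; ring
    rw [hc, h2, ← Real.rpow_mul hlam.le, ← Real.rpow_add hlam]
    congr 1
    have hne : n - 1 ≠ 0 := sub_ne_zero.mpr hn
    field_simp
    ring
  rw [hkey]
  ring
end

section
/- For F(y) = α·y + β/y³ with y > 0 (case 3(b), sl(2,ℝ) symmetry), if y solves y'' + α y + β/y³ = 0, then the function K(t) = y(t)² satisfies the third-order linear equation K''' + 4α K' = 0. -/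
/-!
The quantity `E = y'² + α y² - β / y²` is a first integral of `y'' + α y + β / y³ = 0`:
its derivative is `2 y' (y'' + α y + β / y³)`. Substituting the equation into
`K'' = 2 y'² + 2 y y''` for `K = y²` gives `K'' = 2 E - 4 α K`, and differentiating once more
yields `K''' + 4 α K' = 0`.
-/

noncomputable def ermakovEnergy (α β : ℝ) (y : ℝ → ℝ) (t : ℝ) : ℝ :=
  deriv y t ^ 2 + α * y t ^ 2 - β / y t ^ 2

theorem hasDerivAt_ermakovEnergy (α β : ℝ) {y : ℝ → ℝ} {t : ℝ}
    (hy : DifferentiableAt ℝ y t) (hy' : DifferentiableAt ℝ (deriv y) t) (ht : y t ≠ 0) :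
    HasDerivAt (ermakovEnergy α β y)
      (2 * deriv y t * (deriv (deriv y) t + α * y t + β / y t ^ 3)) t := by
  have h := ((hy'.hasDerivAt.fun_pow 2).fun_add ((hy.hasDerivAt.fun_pow 2).const_mul α)).fun_sub
    ((hasDerivAt_const t β).fun_div (hy.hasDerivAt.fun_pow 2) (pow_ne_zero 2 ht))
  refine h.congr_deriv ?_
  field_simp
  ring

theorem deriv_deriv_sq_eq_ermakovEnergy (α β : ℝ) {y : ℝ → ℝ}
    (hy : Differentiable ℝ y) (hy' : Differentiable ℝ (deriv y)) (hne : ∀ t, y t ≠ 0)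
    (hode : ∀ t, deriv (deriv y) t + α * y t + β / y t ^ 3 = 0) :
    deriv (deriv fun s => y s ^ 2) = fun s => 2 * ermakovEnergy α β y s - 4 * α * y s ^ 2 := by
  have hK : deriv (fun s => y s ^ 2) = fun s => 2 * y s * deriv y s := by
    funext s
    rw [deriv_fun_pow (hy s) 2]
    ring
  funext s
  have hy'' : deriv (deriv y) s = -(α * y s) - β / y s ^ 3 := by linarith [hode s]
  rw [hK, (((hy s).hasDerivAt.const_mul 2).fun_mul (hy' s).hasDerivAt).deriv, hy'',
    ermakovEnergy]
  have := hne s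
  field_simp
  ring

theorem ermakov_linear_third_order_general
    (α β : ℝ) (y : ℝ → ℝ)
    (hy : Differentiable ℝ y) (hy' : Differentiable ℝ (deriv y))
    (hpos : ∀ t, 0 < y t)
    (hode : ∀ t, deriv (deriv y) t + α * y t + β / (y t) ^ 3 = 0) :
    ∀ t, deriv (deriv (deriv (fun s => (y s) ^ 2))) t
        + 4 * α * deriv (fun s => (y s) ^ 2) t = 0 := by
  intro t
  have hne : ∀ t, y t ≠ 0 := fun t => (hpos t).ne'
  have hE : HasDerivAt (ermakovEnergy α β y) 0 t := by
    simpa [hode t] using hasDerivAt_ermakovEnergy α β (hy t) (hy' t) (hne t)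
  have hK : HasDerivAt (fun s => y s ^ 2) (2 * y t * deriv y t) t := by
    simpa [mul_comm] using (hy t).hasDerivAt.fun_pow 2
  rw [deriv_deriv_sq_eq_ermakovEnergy α β hy hy' hne hode,
    ((hE.const_mul 2).fun_sub (hK.const_mul (4 * α))).deriv, hK.deriv]
  ring

theorem ermakov_linear_third_order
    (α β : ℝ) (y : ℝ → ℝ)
    (hy : Differentiable ℝ y) (hy' : Differentiable ℝ (deriv y))
    (hy'' : Differentiable ℝ (deriv (deriv y)))
    (hpos : ∀ t, 0 < y t)
    (hode : ∀ t, deriv (deriv y) t + α * y t + β / (y t) ^ 3 = 0) :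
    ∀ t, deriv (deriv (deriv (fun s => (y s) ^ 2))) t
        + 4 * α * deriv (fun s => (y s) ^ 2) t = 0 :=
  ermakov_linear_third_order_general α β y hy hy' hpos hode
end
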